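/- Every faithful G-extension of the rank-3 fusion category D with fusion rules α²=1+β, β²=1+α+β, αβ=α+β admits an exact factorization C = C_pt • D: every simple object of C is uniquely of the form δ⊗Y with δ invertible simple and Y ∈ Irr(D). -/

import Mathlib

open scoped BigOperators
open Real

/-- A fusion ring: the Grothendieck-ring data of a fusion category, with basis `I`
(the isomorphism classes of simple objects), fusion multiplicities `N`, unit,
duality, and Frobenius–Perron dimensions `d`. -/
structure FusionRing (I : Type) [Fintype I] [DecidableEq I] where
  N : I → I → I → ℕ
  one : I
  dual : I → I
  d : I → ℝ
  d_one : d one = 1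
  one_le_d : ∀ i, 1 ≤ d i
  dual_dual : ∀ i, dual (dual i) = i
  d_dual : ∀ i, d (dual i) = d i
  d_mul : ∀ i j, d i * d j = ∑ k, (N i j k : ℝ) * d k
  N_one_left : ∀ i k, N one i k = if k = i then 1 else 0
  N_one_right : ∀ i k, N i one k = if k = i then 1 else 0
  N_unit : ∀ i j, N i j one = if j = dual i then 1 else 0
  assoc : ∀ i j k l, ∑ m, N i j m * N m k l = ∑ m, N j k m * N i m l

/-- A faithfully `G`-graded fusion ring: the Grothendieck data of a faithful
`G`-extension `C = ⊕_{g ∈ G} C_g` of the fusion category `D = C_e`. -/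
structure GradedFusionRing (G : Type) [Group G] [Fintype G] [DecidableEq G]
    (I : Type) [Fintype I] [DecidableEq I] extends FusionRing I where
  deg : I → G
  deg_one : deg one = 1
  deg_mul : ∀ i j k, N i j k ≠ 0 → deg k = deg i * deg j
  faithful : Function.Surjective deg

/-!
By Gelaki's criterion it suffices that every graded component `C_g` contains an invertible
object and that `1` is the only invertible object of `D`. With `x = FPdim α` and `y = FPdim β`
the fusion rules give `x² = 1 + y` and `xy = x + y`, whence `1 < x < 2` and `1 < y`.

Let `δ` be a simple of minimal dimension in `C_g`. Every constituent of `δ ⊗ α` lies in `C_g`,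
so the total multiplicity of `δ ⊗ α` is at most `x < 2`: it is a single simple `k ≠ δ` with
`FPdim k = x FPdim δ`. By cyclicity `α` does not occur in `δ* ⊗ δ`, so
`FPdim(δ)² = 1 + b y` with `b = [δ* ⊗ δ : β]`. If `b ≥ 1`, the two simples `δ, k` already give
`dim C_g ≥ (1 + y)(1 + x²) > 1 + x² + y² = dim D`, but all components have the same dimension.
Hence `FPdim δ = 1`.
-/

namespace FusionRing

variable {I : Type} [Fintype I] [DecidableEq I] (R : FusionRing I)

lemma d_pos (i : I) : 0 < R.d i := one_pos.trans_le (R.one_le_d i)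

lemma dual_involutive : Function.Involutive R.dual := R.dual_dual

lemma N_cyclic (i j k : I) : R.N i j k = R.N j (R.dual k) (R.dual i) := by
  simpa [R.N_unit, R.dual_involutive.injective.eq_iff, eq_comm] using
    R.assoc i j (R.dual k) R.one

lemma N_cyclic' (i j k : I) : R.N i j k = R.N (R.dual k) i (R.dual j) := by
  rw [R.N_cyclic i j k, R.N_cyclic j, R.dual_dual]

lemma sum_N_mul_d (i k : I) : ∑ j, (R.N i j k : ℝ) * R.d j = R.d i * R.d k := by
  calc ∑ j, (R.N i j k : ℝ) * R.d j
      = ∑ j, (R.N (R.dual k) i (R.dual j) : ℝ) * R.d (R.dual j) := by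
        simp only [← R.N_cyclic', R.d_dual]
    _ = ∑ j, (R.N (R.dual k) i j : ℝ) * R.d j :=
        Equiv.sum_comp (R.dual_involutive.toPerm _) fun j => (R.N (R.dual k) i j : ℝ) * R.d j
    _ = R.d i * R.d k := by rw [← R.d_mul, R.d_dual, mul_comm]

lemma exists_N_ne_zero (i j : I) : ∃ k, R.N i j k ≠ 0 := by
  by_contra! h
  have hd := R.d_mul i j
  simp only [h, Nat.cast_zero, zero_mul, Finset.sum_const_zero] at hd
  exact (mul_pos (R.d_pos i) (R.d_pos j)).ne' hd

lemma d_le_mul_of_N_ne_zero {i j k : I} (h : R.N i j k ≠ 0) : R.d k ≤ R.d i * R.d j := by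
  calc R.d k ≤ R.N i j k * R.d k :=
        le_mul_of_one_le_left (R.d_pos k).le (Nat.one_le_cast.mpr (Nat.one_le_iff_ne_zero.mpr h))
    _ ≤ ∑ m, (R.N i j m : ℝ) * R.d m :=
        Finset.single_le_sum (f := fun m => (R.N i j m : ℝ) * R.d m)
          (fun m _ => mul_nonneg (Nat.cast_nonneg _) (R.d_pos m).le) (Finset.mem_univ k)
    _ = R.d i * R.d j := (R.d_mul i j).symm

lemma d_eq_of_N_ne_zero_of_d_eq_one {i j k : I} (hj : R.d j = 1) (h : R.N i j k ≠ 0) :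
    R.d k = R.d i := by
  apply le_antisymm
  · simpa [hj] using R.d_le_mul_of_N_ne_zero h
  · have h' : R.N j (R.dual k) (R.dual i) ≠ 0 := by rwa [← R.N_cyclic]
    simpa [hj, R.d_dual] using R.d_le_mul_of_N_ne_zero h'

lemma sum_N_eq_one_of_d_eq_one (i : I) {j : I} (hj : R.d j = 1) : ∑ k, R.N i j k = 1 := by
  have h : R.d i = (∑ k, R.N i j k : ℕ) * R.d i := by
    calc R.d i = ∑ k, (R.N i j k : ℝ) * R.d k := by rw [← R.d_mul, hj, mul_one]
      _ = ∑ k, (R.N i j k : ℝ) * R.d i := Finset.sum_congr rfl fun k _ => by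
          by_cases hk : R.N i j k = 0
          · simp [hk]
          · rw [R.d_eq_of_N_ne_zero_of_d_eq_one hj hk]
      _ = (∑ k, R.N i j k : ℕ) * R.d i := by push_cast; rw [Finset.sum_mul]
  exact_mod_cast (mul_eq_right₀ (R.d_pos i).ne').mp h.symm

lemma eq_of_N_ne_zero_of_d_eq_one {i j k k' : I} (hj : R.d j = 1) (hk : R.N i j k ≠ 0)
    (hk' : R.N i j k' ≠ 0) : k = k' :=
  (Finset.sum_le_one_iff.mp (R.sum_N_eq_one_of_d_eq_one i hj).le k k'
    (Finset.mem_univ _) (Finset.mem_univ _) hk hk').1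

lemma dual_eq_self_of_N_ne_zero {i : I} (h : R.N i i R.one ≠ 0) : R.dual i = i := by
  rw [R.N_unit] at h
  split_ifs at h with hi
  · exact hi.symm
  · exact absurd rfl h

lemma d_mul_eq_add_of_N_eq {i j a b : I}
    (h : ∀ k, R.N i j k = (if k = a then 1 else 0) + (if k = b then 1 else 0)) :
    R.d i * R.d j = R.d a + R.d b := by
  simp [R.d_mul, h, add_mul, Finset.sum_add_distrib]

end FusionRing

lemma rank3_dim_bounds {x y : ℝ} (hy : 1 ≤ y) (hxx : x * x = 1 + y) (hxy : x * y = x + y) :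
    1 < x ∧ x < 2 ∧ 1 < y := by
  have hy1 : 1 < y := lt_of_le_of_ne hy fun h => by rw [← h] at hxy; linarith
  have hx1 : 1 < x := by nlinarith
  refine ⟨hx1, ?_, hy1⟩
  by_contra! hx2
  -- `x` is a root of `t³ - t² - 2t + 1 = t (t - 2) (t + 1) + 1`
  nlinarith [mul_nonneg (mul_nonneg (by linarith : (0 : ℝ) ≤ x) (sub_nonneg.mpr hx2))
    (by linarith : (0 : ℝ) ≤ x + 1)]

namespace GradedFusionRing

open Finset

variable {G I : Type} [Group G] [Fintype G] [DecidableEq G] [Fintype I] [DecidableEq I]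
  (R : GradedFusionRing G I)

lemma deg_dual (i : I) : R.deg (R.dual i) = (R.deg i)⁻¹ :=
  eq_inv_of_mul_eq_one_right <| by
    rw [← R.deg_one]
    exact (R.deg_mul _ _ _ (by simp [R.N_unit])).symm

lemma d_mul_eq_sum_filter_deg (i j : I) :
    R.d i * R.d j = ∑ k ∈ univ.filter (fun k => R.deg k = R.deg i * R.deg j),
      (R.N i j k : ℝ) * R.d k := by
  rw [R.d_mul, sum_filter]
  refine sum_congr rfl fun k _ => ?_
  split_ifs with hk
  · rfl
  · rw [show R.N i j k = 0 from by_contra fun h => hk (R.deg_mul i j k h)]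
    simp

def componentDim (g : G) : ℝ := ∑ j ∈ univ.filter (fun j => R.deg j = g), R.d j ^ 2

lemma componentDim_deg (X : I) : R.componentDim (R.deg X) = R.componentDim 1 := by
  have hrow : ∀ i, ∑ j ∈ univ.filter (fun j => R.deg j = R.deg X), (R.N X i j : ℝ) * R.d j
      = if R.deg i = 1 then R.d X * R.d i else 0 := by
    intro i
    split_ifs with hi
    · rw [R.d_mul_eq_sum_filter_deg, hi, mul_one]
    · refine sum_eq_zero fun j hj => ?_
      have hN : R.N X i j = 0 := by
        by_contra h
        have hdeg := R.deg_mul X i j h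
        rw [(mem_filter.mp hj).2, left_eq_mul] at hdeg
        exact hi hdeg
      simp [hN]
  refine mul_left_cancel₀ (R.d_pos X).ne' ?_
  calc R.d X * R.componentDim (R.deg X)
      = ∑ j ∈ univ.filter (fun j => R.deg j = R.deg X), R.d j * ∑ i, (R.N X i j : ℝ) * R.d i := by
        simp only [componentDim, mul_sum, R.sum_N_mul_d]
        exact sum_congr rfl fun j _ => by ring
    _ = ∑ i, R.d i * ∑ j ∈ univ.filter (fun j => R.deg j = R.deg X), (R.N X i j : ℝ) * R.d j := by
        simp only [mul_sum]
        rw [sum_comm]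
        exact sum_congr rfl fun i _ => sum_congr rfl fun j _ => by ring
    _ = R.d X * R.componentDim 1 := by
        simp only [hrow, componentDim, mul_ite, mul_zero, ← sum_filter, mul_sum]
        exact sum_congr rfl fun i _ => by ring

lemma sum_N_le_d_of_isMin {δ c : I} (hmin : ∀ m, R.deg m = R.deg δ → R.d δ ≤ R.d m)
    (hc : R.deg c = 1) : ∑ m, (R.N δ c m : ℝ) ≤ R.d c := by
  refine le_of_mul_le_mul_right ?_ (R.d_pos δ)
  calc (∑ m, (R.N δ c m : ℝ)) * R.d δ ≤ ∑ m, (R.N δ c m : ℝ) * R.d m := by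
        rw [sum_mul]
        refine sum_le_sum fun m _ => ?_
        by_cases hm : R.N δ c m = 0
        · simp [hm]
        · exact mul_le_mul_of_nonneg_left
            (hmin m (by rw [R.deg_mul δ c m hm, hc, mul_one])) (Nat.cast_nonneg _)
    _ = R.d c * R.d δ := by rw [← R.d_mul, mul_comm]

lemma exists_N_eq_ite_of_isMin {δ c : I} (hmin : ∀ m, R.deg m = R.deg δ → R.d δ ≤ R.d m)
    (hc : R.deg c = 1) (hc2 : R.d c < 2) :
    ∃ k, R.deg k = R.deg δ ∧ R.d k = R.d δ * R.d c ∧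
      ∀ m, R.N δ c m = if m = k then 1 else 0 := by
  have hsum : ∑ m, R.N δ c m ≤ 1 := by
    have h := R.sum_N_le_d_of_isMin hmin hc
    exact Nat.lt_succ_iff.mp (by exact_mod_cast h.trans_lt hc2)
  obtain ⟨k, hk⟩ := R.exists_N_ne_zero δ c
  have hk_only := fun m => Finset.sum_le_one_iff.mp hsum m k (mem_univ _) (mem_univ _)
  have hN : ∀ m, R.N δ c m = if m = k then 1 else 0 := fun m => by
    split_ifs with hm
    · exact (hk_only m (hm ▸ hk) hk).2
    · by_contra hm0
      exact hm (hk_only m hm0 hk).1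
  refine ⟨k, by rw [R.deg_mul _ _ _ hk, hc, mul_one], ?_, hN⟩
  simp [R.d_mul, hN]

theorem existsUnique_factorization
    (hpt : ∀ Z : I, ∃ δ, R.deg δ = R.deg Z ∧ R.d δ = 1)
    (htriv : ∀ ε : I, R.deg ε = 1 → R.d ε = 1 → ε = R.one) :
    ∀ Z : I, ∃! p : I × I, R.d p.1 = 1 ∧ R.deg p.2 = 1 ∧ R.N p.1 p.2 Z ≠ 0 := by
  intro Z
  obtain ⟨δ, hδ, hδ1⟩ := hpt Z
  obtain ⟨m, hm⟩ := R.exists_N_ne_zero (R.dual Z) δ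
  have hm_deg : R.deg m = 1 := by rw [R.deg_mul _ _ _ hm, R.deg_dual, hδ, inv_mul_cancel]
  refine ⟨(δ, R.dual m), ⟨hδ1, by rw [R.deg_dual, hm_deg, inv_one], ?_⟩, ?_⟩
  · rwa [R.N_cyclic', R.dual_dual]
  rintro ⟨δ', Y⟩ ⟨hδ'1, hY, hN⟩
  have hδ' : R.deg δ' = R.deg δ := by rw [hδ, R.deg_mul _ _ _ hN, hY, mul_one]
  obtain ⟨ε, hε⟩ := R.exists_N_ne_zero (R.dual δ) δ'
  have hε_one : ε = R.one := by
    refine htriv ε (by rw [R.deg_mul _ _ _ hε, R.deg_dual, hδ', inv_mul_cancel]) ?_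
    refine le_antisymm ?_ (R.one_le_d ε)
    simpa [R.d_dual, hδ1, hδ'1] using R.d_le_mul_of_N_ne_zero hε
  have hδ'δ : δ' = δ := by
    rw [hε_one, R.N_unit, R.dual_dual] at hε
    exact of_not_not fun h => hε (if_neg h)
  subst hδ'δ
  have hYm : R.dual Y = m := by
    rw [R.N_cyclic'] at hN
    exact R.eq_of_N_ne_zero_of_d_eq_one hδ1 hN hm
  simp [← hYm, R.dual_dual]

lemma d_eq_one_of_isMin {α β : I}
    (hD : univ.filter (fun i => R.deg i = 1) = {R.one, α, β})
    (hne1 : α ≠ R.one) (hne2 : β ≠ R.one) (hne3 : α ≠ β)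
    (hαα : ∀ k : I, R.N α α k = (if k = R.one then 1 else 0) + (if k = β then 1 else 0))
    (hαβ : ∀ k : I, R.N α β k = (if k = α then 1 else 0) + (if k = β then 1 else 0))
    {δ : I} (hmin : ∀ m, R.deg m = R.deg δ → R.d δ ≤ R.d m) : R.d δ = 1 := by
  have hxx := R.d_mul_eq_add_of_N_eq hαα
  rw [R.d_one] at hxx
  obtain ⟨hx1, hx2, -⟩ := rank3_dim_bounds (R.one_le_d β) hxx (R.d_mul_eq_add_of_N_eq hαβ)
  have hα : R.deg α = 1 := by
    have h : α ∈ univ.filter (fun i => R.deg i = 1) := by simp [hD]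
    exact (mem_filter.mp h).2
  obtain ⟨k, hk_deg, hk_d, hk_N⟩ := R.exists_N_eq_ite_of_isMin hmin hα hx2
  have hkδ : k ≠ δ := by
    rintro rfl
    nlinarith [R.d_pos k]
  have hsum_D : ∀ f : I → ℝ, ∑ i ∈ univ.filter (fun i => R.deg i = 1), f i
      = f R.one + (f α + f β) := fun f => by
    rw [hD, sum_insert (by simp [hne1.symm, hne2.symm]), sum_insert (by simp [hne3]),
      sum_singleton]
  have hα_dual : R.dual α = α := R.dual_eq_self_of_N_ne_zero (by simp [hαα])
  have hsq : R.d δ * R.d δ = 1 + R.N (R.dual δ) δ β * R.d β := by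
    have h := R.d_mul_eq_sum_filter_deg (R.dual δ) δ
    rw [R.d_dual, R.deg_dual, inv_mul_cancel, hsum_D, R.N_cyclic (R.dual δ) δ α, hα_dual,
      R.dual_dual, hk_N, if_neg hkδ.symm] at h
    simpa [R.N_unit, R.dual_dual, R.d_one] using h
  have hcomp : R.d δ ^ 2 + R.d k ^ 2 ≤ R.componentDim 1 := by
    rw [← R.componentDim_deg δ, componentDim, ← sum_pair (f := fun j => R.d j ^ 2) hkδ.symm]
    exact sum_le_sum_of_subset_of_nonneg (by simp [insert_subset_iff, hk_deg])
      fun _ _ _ => sq_nonneg _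
  rw [componentDim, hsum_D, R.d_one, hk_d] at hcomp
  rcases Nat.eq_zero_or_pos (R.N (R.dual δ) δ β) with hb | hb
  · rw [hb, Nat.cast_zero, zero_mul, add_zero] at hsq
    nlinarith [R.d_pos δ]
  · have hb1 : (1 : ℝ) ≤ R.N (R.dual δ) δ β := by exact_mod_cast hb
    nlinarith [mul_le_mul_of_nonneg_right hb1 (R.d_pos β).le, R.d_pos δ, R.d_pos β]

end GradedFusionRing

theorem stmt11_general {G I : Type} [Group G] [Fintype G] [DecidableEq G]
    [Fintype I] [DecidableEq I] (R : GradedFusionRing G I)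
    (α β : I) (hα : R.deg α = 1) (hβ : R.deg β = 1)
    (hne1 : α ≠ R.one) (hne2 : β ≠ R.one) (hne3 : α ≠ β)
    (hrank : ∀ i : I, R.deg i = 1 → i = R.one ∨ i = α ∨ i = β)
    (hαα : ∀ k : I, R.N α α k = (if k = R.one then 1 else 0) + (if k = β then 1 else 0))
    (hαβ : ∀ k : I, R.N α β k = (if k = α then 1 else 0) + (if k = β then 1 else 0)) :
    ∀ Z : I, ∃! p : I × I,
      R.d p.1 = 1 ∧ R.deg p.2 = 1 ∧ R.N p.1 p.2 Z ≠ 0 := by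
  have hD : Finset.univ.filter (fun i => R.deg i = 1) = {R.one, α, β} := by
    ext i
    simp only [Finset.mem_filter, Finset.mem_univ, true_and, Finset.mem_insert,
      Finset.mem_singleton]
    exact ⟨hrank i, by rintro (rfl | rfl | rfl) <;> simp [R.deg_one, hα, hβ]⟩
  have hxx := R.d_mul_eq_add_of_N_eq hαα
  rw [R.d_one] at hxx
  obtain ⟨hx1, -, hy1⟩ := rank3_dim_bounds (R.one_le_d β) hxx (R.d_mul_eq_add_of_N_eq hαβ)
  refine R.existsUnique_factorization (fun Z => ?_) (fun ε hε hε1 => ?_)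
  · obtain ⟨δ, hδ, hmin⟩ := Finset.exists_min_image
      (Finset.univ.filter fun i => R.deg i = R.deg Z) R.d ⟨Z, by simp⟩
    have hδ_deg : R.deg δ = R.deg Z := (Finset.mem_filter.mp hδ).2
    exact ⟨δ, hδ_deg, R.d_eq_one_of_isMin hD hne1 hne2 hne3 hαα hαβ
      fun m hm => hmin m (by simp [hm, hδ_deg])⟩
  · rcases hrank ε hε with rfl | rfl | rfl
    · rfl
    · linarith
    · linarith

/-- every faithful `G`-extension `C` of the rank-3 fusion category with
fusion rules `α² = 1 ⊕ β`, `β² = 1 ⊕ α ⊕ β`, `αβ = βα = α ⊕ β` admits an exact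
factorization `C = C_pt • D`: every simple object of `C` is uniquely of the form
`δ ⊗ Y` with `δ` an invertible simple and `Y ∈ Irr D`. -/
theorem stmt11 {G I : Type} [Group G] [Fintype G] [DecidableEq G]
    [Fintype I] [DecidableEq I] (R : GradedFusionRing G I)
    (α β : I) (hα : R.deg α = 1) (hβ : R.deg β = 1)
    (hne1 : α ≠ R.one) (hne2 : β ≠ R.one) (hne3 : α ≠ β)
    (hrank : ∀ i : I, R.deg i = 1 → i = R.one ∨ i = α ∨ i = β)
    (hαα : ∀ k : I, R.N α α k = (if k = R.one then 1 else 0) + (if k = β then 1 else 0))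
    (hββ : ∀ k : I, R.N β β k =
      (if k = R.one then 1 else 0) + (if k = α then 1 else 0) + (if k = β then 1 else 0))
    (hαβ : ∀ k : I, R.N α β k = (if k = α then 1 else 0) + (if k = β then 1 else 0))
    (hβα : ∀ k : I, R.N β α k = (if k = α then 1 else 0) + (if k = β then 1 else 0)) :
    ∀ Z : I, ∃! p : I × I,
      R.d p.1 = 1 ∧ R.deg p.2 = 1 ∧ R.N p.1 p.2 Z ≠ 0 :=
  stmt11_general R α β hα hβ hne1 hne2 hne3 hrank hαα hαβ
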